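/- Let φ : R → S be a ring homomorphism making S a finitely presented right R-module, and let X be a pure injective left R-module. Then S ⊗_R X is a pure injective left S-module. -/

import Mathlib

universe v

/-- A monomorphism of `R`-modules is pure if tensoring with any module preserves
injectivity. -/
def IsPureMono {R : Type*} [CommRing R] {L M : Type*}
    [AddCommGroup L] [Module R L] [AddCommGroup M] [Module R M]
    (f : L →ₗ[R] M) : Prop :=
  Function.Injective f ∧
    ∀ (X : Type*) [AddCommGroup X] [Module R X],
      Function.Injective (LinearMap.lTensor X f)

/-- A module `M` is pure injective if `Hom(-, M)` sends pure monomorphisms to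
surjections, i.e. every map to `M` extends along any pure monomorphism. -/
def IsPureInjective (R : Type*) [CommRing R] (M : Type v) [AddCommGroup M]
    [Module R M] : Prop :=
  ∀ ⦃L N : Type v⦄ [AddCommGroup L] [Module R L] [AddCommGroup N] [Module R N]
    (f : L →ₗ[R] N), IsPureMono.{_, v, v, v} f →
      ∀ g : L →ₗ[R] M, ∃ h : N →ₗ[R] M, h.comp f = g

/-!
The evaluation map `X → X**` into the double character dual is a pure monomorphism, so a pure
injective `X` is a retract of `X**`, and `S ⊗ X` is a retract of `S ⊗ X**`. As `S` is finitely
presented, the natural map `S ⊗ X** → (S ⊗ X)**` is bijective: both sides are right exact in `S`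
(character duals are exact, `ℚ/ℤ` being injective) and the map is bijective on finite free
modules. Finally `(S ⊗ X)**` is pure injective over `S`, because `Hom(-, B*) ≅ (- ⊗ B)*` turns
pure monomorphisms into surjections.
-/

open TensorProduct LinearMap

theorem LinearMap.bijective_of_sum_comp_eq_id {R : Type*} [Semiring R] {M N M' N' : Type*}
    [AddCommGroup M] [Module R M] [AddCommGroup N] [Module R N] [AddCommGroup M'] [Module R M']
    [AddCommGroup N'] [Module R N'] {ι : Type*} (s : Finset ι) {θ : M →ₗ[R] N} {θ' : M' →ₗ[R] N'}
    (hθ' : Function.Bijective θ') (a : ι → M' →ₗ[R] M) (b : ι → M →ₗ[R] M')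
    (c : ι → N' →ₗ[R] N) (d : ι → N →ₗ[R] N') (hab : ∑ i ∈ s, a i ∘ₗ b i = id)
    (hcd : ∑ i ∈ s, c i ∘ₗ d i = id) (hac : ∀ i, θ ∘ₗ a i = c i ∘ₗ θ')
    (hbd : ∀ i, θ' ∘ₗ b i = d i ∘ₗ θ) : Function.Bijective θ := by
  refine ⟨(injective_iff_map_eq_zero θ).2 fun x hx => ?_, fun y => ?_⟩
  · have hb : ∀ i, b i x = 0 := fun i => hθ'.1 <| by
      rw [map_zero, ← comp_apply, hbd, comp_apply, hx, map_zero]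
    simpa [hb] using congr($hab x).symm
  · choose z hz using fun i => hθ'.2 (d i y)
    refine ⟨∑ i ∈ s, a i (z i), ?_⟩
    calc θ (∑ i ∈ s, a i (z i)) = ∑ i ∈ s, c i (θ' (z i)) := by
          simp only [map_sum, ← comp_apply, hac]
      _ = y := by simpa [hz] using congr($hcd y)

namespace CharacterModule

variable {R : Type*} [CommRing R] {A B C : Type*} [AddCommGroup A] [Module R A]
  [AddCommGroup B] [Module R B] [AddCommGroup C] [Module R C]

variable (R A B) in
@[simps] def dualₗ : (A →ₗ[R] B) →ₗ[R] (CharacterModule B →ₗ[R] CharacterModule A) where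
  toFun := dual
  map_add' f g := by ext c a; exact c.map_add (f a) (g a)
  map_smul' r f := by ext c a; exact congr(c $(f.map_smul r a)).symm

lemma exact_dual_of_surjective {f : A →ₗ[R] B} {g : B →ₗ[R] C} (h : Function.Exact f g)
    (hg : Function.Surjective g) : Function.Exact (dual g) (dual f) := by
  refine fun φ => ⟨fun hφ => ?_, ?_⟩
  · let φ' := QuotientAddGroup.lift (range f).toAddSubgroup φ
      (by rintro _ ⟨a, rfl⟩; exact congr($hφ a))
    refine ⟨φ'.comp (h.linearEquivOfSurjective hg).symm.toAddMonoidHom, ?_⟩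
    ext b
    show φ' ((h.linearEquivOfSurjective hg).symm (g b)) = φ b
    rw [h.linearEquivOfSurjective_symm_apply]
    rfl
  · rintro ⟨χ, rfl⟩
    ext a
    exact congr(χ $(h.apply_apply_eq_zero a)).trans χ.map_zero

lemma exact_dual {f : A →ₗ[R] B} {g : B →ₗ[R] C} (h : Function.Exact f g) :
    Function.Exact (dual g) (dual f) := by
  have hsurj : Function.Surjective (dual (range g).subtype) :=
    dual_surjective_of_injective _ (Submodule.injective_subtype _)
  have := exact_dual_of_surjective ((Submodule.injective_subtype _).comp_exact_iff_exact.mp h)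
    g.surjective_rangeRestrict
  rwa [← hsurj.comp_exact_iff_exact, ← dual_comp] at this

variable (R A) in
def eval : A →ₗ[R] CharacterModule (CharacterModule A) where
  toFun a := { toFun := fun c => c a, map_zero' := rfl, map_add' := fun _ _ => rfl }
  map_add' a b := by ext c; exact c.map_add a b
  map_smul' r a := by ext c; rfl

lemma eval_injective : Function.Injective (eval R A) :=
  (injective_iff_map_eq_zero _).2 fun _ ha => eq_zero_of_character_apply fun c => congr($ha c)

variable (R) in
/-- `v ⊗ g ↦ (φ ↦ g (φ (v ⊗ ·)))` -/
noncomputable def tensorDoubleDual (V X : Type*) [AddCommGroup V] [Module R V] [AddCommGroup X]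
    [Module R X] :
    V ⊗[R] CharacterModule (CharacterModule X) →ₗ[R] CharacterModule (CharacterModule (V ⊗[R] X)) :=
  TensorProduct.lift (dualₗ R _ _ ∘ₗ dualₗ R _ _ ∘ₗ TensorProduct.mk R V X)

section tensorDoubleDual

variable {V W X : Type*} [AddCommGroup V] [Module R V] [AddCommGroup W] [Module R W]
  [AddCommGroup X] [Module R X]

lemma tensorDoubleDual_comp_rTensor (j : V →ₗ[R] W) :
    tensorDoubleDual R W X ∘ₗ j.rTensor _ = dual (dual (j.rTensor X)) ∘ₗ tensorDoubleDual R V X :=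
  TensorProduct.ext' fun _ _ => rfl

lemma tensorDoubleDual_comp_eval :
    tensorDoubleDual R V X ∘ₗ (eval R X).lTensor V = eval R (V ⊗[R] X) :=
  TensorProduct.ext' fun _ _ => rfl

lemma tensorDoubleDual_self_bijective : Function.Bijective (tensorDoubleDual R R X) := by
  have h : tensorDoubleDual R R X = dual (dual (TensorProduct.lid R X).symm.toLinearMap) ∘ₗ
      (TensorProduct.lid R _).toLinearMap := by
    refine TensorProduct.ext' fun r g => ?_
    ext φ
    change g _ = g _
    congr 1
    ext x
    change φ (r ⊗ₜ x) = φ (1 ⊗ₜ (r • x))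
    rw [← smul_tmul, smul_eq_mul, mul_one]
  rw [h]
  exact ((dual_bijective_iff_bijective.mpr (dual_bijective_iff_bijective.mpr
    (TensorProduct.lid R X).symm.bijective))).comp (TensorProduct.lid R _).bijective

lemma tensorDoubleDual_pi_bijective (ι : Type*) [Fintype ι] :
    Function.Bijective (tensorDoubleDual R (ι → R) X) := by
  classical
  let ε (i : ι) : R →ₗ[R] ι → R := single R (fun _ => R) i
  let π (i : ι) : (ι → R) →ₗ[R] R := proj i
  have hsum : ∑ i, ε i ∘ₗ π i = LinearMap.id := by
    rw [← lsum_apply R _ R, lsum_single]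
  refine bijective_of_sum_comp_eq_id Finset.univ tensorDoubleDual_self_bijective
    (fun i => (ε i).rTensor _) (fun i => (π i).rTensor _)
    (fun i => dual (dual ((ε i).rTensor X))) (fun i => dual (dual ((π i).rTensor X))) ?_ ?_
    (fun i => tensorDoubleDual_comp_rTensor _) (fun i => tensorDoubleDual_comp_rTensor _)
  · rw [Finset.sum_congr rfl fun i _ => (rTensor_comp _ _ _).symm, ← coe_rTensorHom, ← map_sum,
      hsum, coe_rTensorHom, rTensor_id]
  · have hcomp (i : ι) : dual (dual ((ε i).rTensor X)) ∘ₗ dual (dual ((π i).rTensor X)) =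
        (dualₗ R _ _ ∘ₗ dualₗ R _ _ ∘ₗ rTensorHom X) (ε i ∘ₗ π i) := by
      simp only [coe_comp, Function.comp_apply, dualₗ_apply, coe_rTensorHom, rTensor_comp,
        dual_comp]
    rw [Finset.sum_congr rfl fun i _ => hcomp i, ← map_sum, hsum, comp_apply, comp_apply,
      coe_rTensorHom, rTensor_id]
    rfl

lemma tensorDoubleDual_bijective [Module.FinitePresentation R V] :
    Function.Bijective (tensorDoubleDual R V X) := by
  obtain ⟨n, m, p, q, hp, hqp⟩ := Module.FinitePresentation.exists_fin' R V
  exact bijective_of_surjective_of_bijective_of_right_exact (q.rTensor _) (p.rTensor _)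
    (dual (dual (q.rTensor X))) (dual (dual (p.rTensor X))) (tensorDoubleDual R _ X)
    (tensorDoubleDual R _ X) (tensorDoubleDual R _ X) (tensorDoubleDual_comp_rTensor q).symm
    (tensorDoubleDual_comp_rTensor p).symm (rTensor_exact _ hqp hp)
    (exact_dual (exact_dual (rTensor_exact X hqp hp))) (tensorDoubleDual_pi_bijective _).2
    (tensorDoubleDual_pi_bijective _) (rTensor_surjective _ hp)
    (dual_surjective_of_injective _ (dual_injective_of_surjective _ (rTensor_surjective X hp)))

lemma tensorDoubleDual_smul {A : Type*} [CommRing A] [Module A V] [SMulCommClass R A V] (a : A)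
    (t : V ⊗[R] CharacterModule (CharacterModule X)) :
    tensorDoubleDual R V X (a • t) = a • tensorDoubleDual R V X t := by
  induction t using TensorProduct.induction_on with
  | zero => simp
  | tmul v g => rfl
  | add t t' ht ht' => simp [ht, ht']

variable (R V X) in
noncomputable def tensorDoubleDualEquiv (A : Type*) [CommRing A] [Module A V] [SMulCommClass R A V]
    [Module.FinitePresentation R V] :
    V ⊗[R] CharacterModule (CharacterModule X) ≃ₗ[A] CharacterModule (CharacterModule (V ⊗[R] X)) :=
  .ofBijective { tensorDoubleDual R V X with map_smul' := tensorDoubleDual_smul }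
    tensorDoubleDual_bijective

end tensorDoubleDual

end CharacterModule

section PureInjective

universe w

lemma CharacterModule.isPureMono_eval {R : Type*} [CommRing R] (X : Type*) [AddCommGroup X]
    [Module R X] : IsPureMono.{_, _, _, w} (CharacterModule.eval R X) := by
  refine ⟨CharacterModule.eval_injective, fun Y _ _ => ?_⟩
  have h := (CharacterModule.eval_injective (R := R) (A := Y ⊗[R] X))
  rw [← CharacterModule.tensorDoubleDual_comp_eval, coe_comp] at h
  exact h.of_comp

lemma CharacterModule.isPureInjective {S : Type*} [CommRing S] (B : Type v) [AddCommGroup B]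
    [Module S B] : IsPureInjective S (CharacterModule B) := by
  intro L N _ _ _ _ f hf g
  have hinj : Function.Injective (f.rTensor B) := (lTensor_inj_iff_rTensor_inj B f).mp (hf.2 B)
  exact rTensor_injective_iff_lcomp_surjective.mp hinj g

lemma IsPureInjective.of_retract {S : Type*} [CommRing S] {M P : Type v} [AddCommGroup M]
    [Module S M] [AddCommGroup P] [Module S P] (hP : IsPureInjective S P) (i : M →ₗ[S] P)
    (r : P →ₗ[S] M) (hri : r ∘ₗ i = LinearMap.id) : IsPureInjective S M := by
  intro L N _ _ _ _ f hf g
  obtain ⟨h, hh⟩ := hP f hf (i ∘ₗ g)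
  exact ⟨r ∘ₗ h, by rw [comp_assoc, hh, ← comp_assoc, hri, id_comp]⟩

end PureInjective

/-- If `S` is an `R`-algebra which is finitely presented as an `R`-module
and `X` is a pure injective `R`-module, then `S ⊗[R] X` is a pure injective
`S`-module. -/
theorem pureInjective_baseChange
    {R S : Type v} [CommRing R] [CommRing S] [Algebra R S]
    [Module.FinitePresentation R S]
    (X : Type v) [AddCommGroup X] [Module R X] (hX : IsPureInjective R X) :
    IsPureInjective S (TensorProduct R S X) := by
  obtain ⟨r, hr⟩ := hX (CharacterModule.eval R X) (CharacterModule.isPureMono_eval X) LinearMap.id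
  let e := CharacterModule.tensorDoubleDualEquiv R S X S
  have hdd : IsPureInjective S (S ⊗[R] CharacterModule (CharacterModule X)) :=
    (CharacterModule.isPureInjective _).of_retract e.toLinearMap e.symm.toLinearMap
      e.symm_comp
  exact hdd.of_retract ((CharacterModule.eval R X).baseChange S) (r.baseChange S)
    (by rw [← baseChange_comp, hr, baseChange_id])
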